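/- Let ε ∈ (0,1] and p ∈ Δ(K) with p(k) > ε for all k ∈ K, and let x be a mixed action that is ε-concise at p. Then ∑_{i∈I} x̄^p(i)·‖p^x(·|i) − p‖₁ ≤ 3·ε^{−5}·∑_{i∈I} x̄^p(i)·‖p^x(·|i) − p‖₁². -/

import Mathlib

/-!
Write `w i = bar p x i` and `f i = postDist p x i` for the ℓ¹ distance of the posterior after `i`
from `p`, so that `w i * f i = ∑ k, p k * |x k i - w i|`. A revealing action moves some
coordinate of the posterior by more than `ε * p k > ε ^ 2`, so on revealing actions
`ε ^ 2 * w f ≤ w f ^ 2`. On the non-revealing block `N` conciseness makes `x k i - w i`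
proportional to `w i`, so the deviations of that block do not cancel and add up to
`|x(N|k) - x̄(N)|`; since all deviations sum to zero, this is the deviation of the revealing
block, which is at most its total deviation. Hence `∑ w f ≤ 2 ∑_{i ∉ N} w f ≤ 2 ε⁻² ∑ w f ^ 2`.
-/

open Finset

noncomputable section
open Classical

/-- `p` is an element of the probability simplex Δ(K). -/
def pSimplex {K : Type*} [Fintype K] (p : K → ℝ) : Prop :=
  (∀ k, 0 ≤ p k) ∧ ∑ k, p k = 1

/-- `x : K → Δ(I)` is a mixed action, written `x k i = x(i|k)`. -/
def MixedAction {K I : Type*} [Fintype K] [Fintype I] (x : K → I → ℝ) : Prop :=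
  (∀ k i, 0 ≤ x k i) ∧ ∀ k, ∑ i, x k i = 1

/-- Marginal `x̄^p(i) = ∑_k p(k)·x(i|k)`. -/
def bar {K I : Type*} [Fintype K] (p : K → ℝ) (x : K → I → ℝ) (i : I) : ℝ :=
  ∑ k, p k * x k i

/-- Posterior `p^x(k|i)`. -/
def post {K I : Type*} [Fintype K] (p : K → ℝ) (x : K → I → ℝ) (i : I) (k : K) : ℝ :=
  if bar p x i ≠ 0 then x k i * p k / bar p x i else p k

/-- The set `NR[x,ε,p]` of (x,ε)-non-revealing actions at p. -/
def NRset {K I : Type*} [Fintype K] [Fintype I] (x : K → I → ℝ) (ε : ℝ) (p : K → ℝ) :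
    Finset I :=
  Finset.univ.filter fun i =>
    bar p x i ≠ 0 ∧ ∀ k, (1 - ε) * bar p x i ≤ x k i ∧ x k i ≤ (1 + ε) * bar p x i

/-- The set `R[x,ε,p]` of (x,ε)-revealing actions at p. -/
def Rset {K I : Type*} [Fintype K] [Fintype I] (x : K → I → ℝ) (ε : ℝ) (p : K → ℝ) :
    Finset I :=
  (Finset.univ.filter fun i => bar p x i ≠ 0) \ NRset x ε p

/-- `x(A|k) = ∑_{i∈A} x(i|k)`. -/
def xOn {K I : Type*} (x : K → I → ℝ) (A : Finset I) (k : K) : ℝ := ∑ i ∈ A, x k i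

/-- `x̄^p(A) = ∑_{i∈A} x̄^p(i)`. -/
def barOn {K I : Type*} [Fintype K] (p : K → ℝ) (x : K → I → ℝ) (A : Finset I) : ℝ :=
  ∑ i ∈ A, bar p x i

/-- The ε-silent mapping `c_ε(x,p)`. -/
def silent {K I : Type*} [Fintype K] [Fintype I] (ε : ℝ) (x : K → I → ℝ) (p : K → ℝ) :
    K → I → ℝ :=
  fun k i =>
    if i ∈ NRset x ε p then
      ((1 - ε) * xOn x (NRset x ε p) k / barOn p x (NRset x ε p) + ε) * bar p x i
    else (1 - ε) * x k i + ε * bar p x i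

theorem Finset.sum_abs_sub_eq_abs_sum_sub_of_eq_mul {ι : Type*} {s : Finset ι} {a w : ι → ℝ}
    (c : ℝ) (hw : ∀ i ∈ s, 0 ≤ w i) (ha : ∀ i ∈ s, a i = c * w i) :
    ∑ i ∈ s, |a i - w i| = |∑ i ∈ s, a i - ∑ i ∈ s, w i| := by
  have hsub : ∀ i ∈ s, a i - w i = (c - 1) * w i := fun i hi => by rw [ha i hi]; ring
  rw [← sum_sub_distrib, sum_congr rfl hsub, ← mul_sum, abs_mul,
    abs_of_nonneg (sum_nonneg hw), mul_sum]
  exact sum_congr rfl fun i hi => by rw [hsub i hi, abs_mul, abs_of_nonneg (hw i hi)]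

theorem Finset.abs_sum_le_sum_compl_abs_of_sum_eq_zero {ι : Type*} [Fintype ι] [DecidableEq ι]
    {g : ι → ℝ} (hg : ∑ i, g i = 0) (s : Finset ι) :
    |∑ i ∈ s, g i| ≤ ∑ i ∈ sᶜ, |g i| := by
  have hcompl : ∑ i ∈ s, g i = -∑ i ∈ sᶜ, g i := by
    rw [eq_neg_iff_add_eq_zero, sum_add_sum_compl, hg]
  rw [hcompl, abs_neg]
  exact abs_sum_le_sum_abs g sᶜ

def postDist {K I : Type*} [Fintype K] (p : K → ℝ) (x : K → I → ℝ) (i : I) : ℝ :=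
  ∑ k, |post p x i k - p k|

section

variable {K I : Type*} [Fintype K] {p : K → ℝ} {x : K → I → ℝ}

theorem bar_nonneg (hp : ∀ k, 0 ≤ p k) (hx : ∀ k i, 0 ≤ x k i) (i : I) : 0 ≤ bar p x i :=
  sum_nonneg fun k _ => mul_nonneg (hp k) (hx k i)

theorem sum_bar [Fintype I] (hx : ∀ k, ∑ i, x k i = 1) : ∑ i, bar p x i = ∑ k, p k := by
  simp only [bar]
  rw [sum_comm]
  exact sum_congr rfl fun k _ => by rw [← mul_sum, hx k, mul_one]

theorem sum_sub_bar_eq_zero [Fintype I] (hp : ∑ k, p k = 1) (hx : ∀ k, ∑ i, x k i = 1) (k : K) :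
    ∑ i, (x k i - bar p x i) = 0 := by
  rw [sum_sub_distrib, sum_bar hx, hx k, hp, sub_self]

theorem post_sub_eq {i : I} (hb : bar p x i ≠ 0) (k : K) :
    post p x i k - p k = p k * (x k i - bar p x i) / bar p x i := by
  rw [post, if_pos hb]
  field_simp

theorem bar_mul_postDist (hp : ∀ k, 0 ≤ p k) (hx : ∀ k i, 0 ≤ x k i) (i : I) :
    bar p x i * postDist p x i = ∑ k, p k * |x k i - bar p x i| := by
  rcases (bar_nonneg hp hx i).eq_or_lt with hb | hb
  · have hterm : ∀ k, p k * |x k i - bar p x i| = p k * x k i := fun k => by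
      rw [← hb, sub_zero, abs_of_nonneg (hx k i)]
    rw [sum_congr rfl fun k _ => hterm k, ← hb, zero_mul]
    exact hb
  · rw [postDist, mul_sum]
    refine sum_congr rfl fun k _ => ?_
    rw [post_sub_eq hb.ne', abs_div, abs_mul, abs_of_nonneg (hp k), abs_of_pos hb]
    field_simp

theorem postDist_nonneg (i : I) : 0 ≤ postDist p x i :=
  sum_nonneg fun _ _ => abs_nonneg _

theorem exists_lt_abs_sub_of_notMem_NRset [Fintype I] {ε : ℝ} {i : I} (hb : bar p x i ≠ 0)
    (hi : i ∉ NRset x ε p) : ∃ k, ε * bar p x i < |x k i - bar p x i| := by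
  by_contra! h
  refine hi (mem_filter.2 ⟨mem_univ i, hb, fun k => ?_⟩)
  have := abs_le.1 (h k)
  constructor <;> linarith

theorem sq_le_postDist_of_notMem_NRset [Fintype I] {ε : ℝ} {i : I} (hε : 0 ≤ ε)
    (hpε : ∀ k, ε ≤ p k) (hb : 0 < bar p x i) (hi : i ∉ NRset x ε p) :
    ε ^ 2 ≤ postDist p x i := by
  obtain ⟨k, hk⟩ := exists_lt_abs_sub_of_notMem_NRset hb.ne' hi
  have hterm : ε ^ 2 ≤ |post p x i k - p k| := by
    rw [post_sub_eq hb.ne', abs_div, abs_mul, abs_of_nonneg (hε.trans (hpε k)),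
      abs_of_pos hb, le_div_iff₀ hb]
    calc ε ^ 2 * bar p x i = ε * (ε * bar p x i) := by ring
      _ ≤ p k * |x k i - bar p x i| :=
        mul_le_mul (hpε k) hk.le (by positivity) (hε.trans (hpε k))
  exact hterm.trans (single_le_sum (fun k _ => abs_nonneg (post p x i k - p k)) (mem_univ k))

theorem sq_mul_bar_mul_postDist_le [Fintype I] {ε : ℝ} {i : I} (hε : 0 ≤ ε)
    (hpε : ∀ k, ε ≤ p k) (hx : ∀ k j, 0 ≤ x k j) (hi : i ∉ NRset x ε p) :
    ε ^ 2 * (bar p x i * postDist p x i) ≤ bar p x i * postDist p x i ^ 2 := by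
  rcases (bar_nonneg (fun k => hε.trans (hpε k)) hx i).eq_or_lt with hb | hb
  · simp [← hb]
  · have hdist := sq_le_postDist_of_notMem_NRset hε hpε hb hi
    calc ε ^ 2 * (bar p x i * postDist p x i)
        = bar p x i * (ε ^ 2 * postDist p x i) := by ring
      _ ≤ bar p x i * (postDist p x i * postDist p x i) := by
        gcongr
        exact postDist_nonneg i
      _ = bar p x i * postDist p x i ^ 2 := by ring

theorem sum_mul_postDist_le_compl_of_proportional [Fintype I] (hp : pSimplex p)
    (hx : MixedAction x) (A : Finset I) (c : K → ℝ)
    (hA : ∀ i ∈ A, ∀ k, x k i = c k * bar p x i) :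
    ∑ i ∈ A, bar p x i * postDist p x i ≤ ∑ i ∈ Aᶜ, bar p x i * postDist p x i := by
  obtain ⟨hp0, hp1⟩ := hp
  obtain ⟨hx0, hx1⟩ := hx
  have hblock : ∀ k, ∑ i ∈ A, |x k i - bar p x i| ≤ ∑ i ∈ Aᶜ, |x k i - bar p x i| := fun k => by
    rw [sum_abs_sub_eq_abs_sum_sub_of_eq_mul (c k) (fun i _ => bar_nonneg hp0 hx0 i)
      (fun i hi => hA i hi k), ← sum_sub_distrib]
    exact abs_sum_le_sum_compl_abs_of_sum_eq_zero (sum_sub_bar_eq_zero hp1 hx1 k) A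
  simp only [bar_mul_postDist hp0 hx0]
  calc ∑ i ∈ A, ∑ k, p k * |x k i - bar p x i|
      = ∑ k, p k * ∑ i ∈ A, |x k i - bar p x i| := by simp only [mul_sum]; exact sum_comm
    _ ≤ ∑ k, p k * ∑ i ∈ Aᶜ, |x k i - bar p x i| :=
      sum_le_sum fun k _ => mul_le_mul_of_nonneg_left (hblock k) (hp0 k)
    _ = ∑ i ∈ Aᶜ, ∑ k, p k * |x k i - bar p x i| := by simp only [mul_sum]; exact sum_comm

end

theorem concise_l1_le_l2_general {K I : Type*} [Fintype K] [Fintype I]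
    (ε : ℝ) (hε0 : 0 < ε) (hε1 : ε ≤ 1)
    (p : K → ℝ) (hp : pSimplex p) (hpε : ∀ k, ε < p k)
    (x : K → I → ℝ) (hx : MixedAction x)
    (hconc : ∀ i ∈ NRset x ε p, ∀ k : K,
      x k i = xOn x (NRset x ε p) k / barOn p x (NRset x ε p) * bar p x i) :
    ∑ i, bar p x i * (∑ k, |post p x i k - p k|) ≤
      3 / ε ^ 5 * ∑ i, bar p x i * (∑ k, |post p x i k - p k|) ^ 2 := by
  change ∑ i, bar p x i * postDist p x i ≤ 3 / ε ^ 5 * ∑ i, bar p x i * postDist p x i ^ 2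
  set N := NRset x ε p
  set B := ∑ i ∈ Nᶜ, bar p x i * postDist p x i
  set S := ∑ i, bar p x i * postDist p x i ^ 2
  have hN : ∑ i ∈ N, bar p x i * postDist p x i ≤ B :=
    sum_mul_postDist_le_compl_of_proportional hp hx N _ hconc
  have hB : ε ^ 2 * B ≤ S :=
    calc ε ^ 2 * B = ∑ i ∈ Nᶜ, ε ^ 2 * (bar p x i * postDist p x i) := mul_sum _ _ _
      _ ≤ ∑ i ∈ Nᶜ, bar p x i * postDist p x i ^ 2 := sum_le_sum fun i hi =>
        sq_mul_bar_mul_postDist_le hε0.le (fun k => (hpε k).le) hx.1 (mem_compl.1 hi)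
      _ ≤ S := sum_le_sum_of_subset_of_nonneg (subset_univ _) fun i _ _ =>
        mul_nonneg (bar_nonneg hp.1 hx.1 i) (sq_nonneg _)
  have hS : 0 ≤ S := sum_nonneg fun i _ => mul_nonneg (bar_nonneg hp.1 hx.1 i) (sq_nonneg _)
  calc ∑ i, bar p x i * postDist p x i = ∑ i ∈ N, bar p x i * postDist p x i + B :=
        (sum_add_sum_compl N _).symm
    _ ≤ 2 * B := by linarith
    _ ≤ 2 * (S / ε ^ 2) := by
      gcongr
      rw [le_div_iff₀ (by positivity)]
      linarith
    _ = 2 * ε ^ 3 / ε ^ 5 * S := by field_simp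
    _ ≤ 3 / ε ^ 5 * S := by
      gcongr
      nlinarith [pow_le_one₀ (n := 3) hε0.le hε1]

/-- per-stage L¹-vs-L² inequality for ε-concise actions away from the frontier. -/
theorem concise_l1_le_l2 {K I : Type*} [Fintype K] [Fintype I]
    [Nonempty K] [Nonempty I]
    (ε : ℝ) (hε0 : 0 < ε) (hε1 : ε ≤ 1)
    (p : K → ℝ) (hp : pSimplex p) (hpε : ∀ k, ε < p k)
    (x : K → I → ℝ) (hx : MixedAction x)
    (hconc : ∀ i ∈ NRset x ε p, ∀ k : K,
      x k i = xOn x (NRset x ε p) k / barOn p x (NRset x ε p) * bar p x i) :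
    ∑ i, bar p x i * (∑ k, |post p x i k - p k|) ≤
      3 / ε ^ 5 * ∑ i, bar p x i * (∑ k, |post p x i k - p k|) ^ 2 :=
  concise_l1_le_l2_general ε hε0 hε1 p hp hpε x hx hconc
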